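/- Union lemma for d⁺: if A₁,…,A_K are pairwise disjoint finite nonempty sets of reals, then d⁺(⋃ⱼ Aⱼ) ≤ |⋃ⱼ Aⱼ|⁻¹ · (Σⱼ d⁺(Aⱼ)^{1/3}|Aⱼ|^{1/3})³, where d⁺(A) = sup over finite nonempty B ⊂ ℝ of E₃⁺(A,B)/(|A||B|²). -/

import Mathlib

open Finset Pointwise BigOperators

noncomputable section

/-- number of pairs (a,b) ∈ A×B with a - b = x -/
def rsub (A B : Finset ℝ) (x : ℝ) : ℕ :=
  ((A ×ˢ B).filter (fun p => p.1 - p.2 = x)).card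

/-- number of pairs (a,b) ∈ A×B with a = x*b -/
def rdiv (A B : Finset ℝ) (x : ℝ) : ℕ :=
  ((A ×ˢ B).filter (fun p => p.1 = x * p.2)).card

/-- additive energy E⁺(A,B) = Σ_x r_{A−B}(x)² -/
def Eplus (A B : Finset ℝ) : ℕ := ∑ x ∈ A - B, (rsub A B x) ^ 2

/-- multiplicative energy E^×(A,B) = Σ_x r_{A/B}(x)² -/
def Etimes (A B : Finset ℝ) : ℕ := ∑ x ∈ A / B, (rdiv A B x) ^ 2

/-- third additive energy -/
def E3plus (A B : Finset ℝ) : ℕ := ∑ x ∈ A - B, (rsub A B x) ^ 3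

/-- third multiplicative energy -/
def E3times (A B : Finset ℝ) : ℕ := ∑ x ∈ A / B, (rdiv A B x) ^ 3

/-- fourth additive energy -/
def E4plus (A B : Finset ℝ) : ℕ := ∑ x ∈ A - B, (rsub A B x) ^ 4

/-- d⁺(A) -/
def dplus (A : Finset ℝ) : ℝ :=
  ⨆ B : {B : Finset ℝ // B.Nonempty}, (E3plus A B.1 : ℝ) / (A.card * (B.1.card : ℝ) ^ 2)

/-- d^×(A) -/
def dtimes (A : Finset ℝ) : ℝ :=
  ⨆ B : {B : Finset ℝ // B.Nonempty}, (E3times A B.1 : ℝ) / (A.card * (B.1.card : ℝ) ^ 2)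

/-- d₄⁺(A) -/
def d4plus (A : Finset ℝ) : ℝ :=
  ⨆ B : {B : Finset ℝ // B.Nonempty}, (E4plus A B.1 : ℝ) / (A.card * (B.1.card : ℝ) ^ 3)

end

/-!
Write `r_X(x)` for the number of pairs in `X × B` with difference `x`, so that
`E₃⁺(X, B) = ‖r_X‖₃³`. For `U = ⋃ⱼ Aⱼ` one has `r_U ≤ ∑ⱼ r_{Aⱼ}` pointwise, so Minkowski's
inequality in `ℓ³` gives `E₃⁺(U, B)^{1/3} ≤ ∑ⱼ E₃⁺(Aⱼ, B)^{1/3}`, and each summand is at most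
`(d⁺(Aⱼ) |Aⱼ|)^{1/3} |B|^{2/3}` by definition of `d⁺(Aⱼ)`. Cubing and dividing by `|U| |B|²`
bounds every quotient in the supremum defining `d⁺(U)`.
-/

section Energy

variable (A B : Finset ℝ)

lemma rsub_le_card_left (x : ℝ) : rsub A B x ≤ #A := by
  refine card_le_card_of_injOn Prod.fst (fun p hp => ?_) fun p hp q hq hpq => ?_
  · exact (mem_product.mp (mem_filter.mp hp).1).1
  · have hp' := (mem_filter.mp hp).2
    have hq' := (mem_filter.mp hq).2
    exact Prod.ext hpq (by linarith)

lemma sum_rsub : ∑ x ∈ A - B, rsub A B x = #A * #B := by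
  rw [← card_product]
  exact (card_eq_sum_card_fiberwise fun p hp =>
    sub_mem_sub (mem_product.mp hp).1 (mem_product.mp hp).2).symm

lemma rsub_eq_zero_of_notMem {x : ℝ} (hx : x ∉ A - B) : rsub A B x = 0 := by
  refine card_eq_zero.mpr (filter_eq_empty_iff.mpr fun p hp hpx => hx ?_)
  exact hpx ▸ sub_mem_sub (mem_product.mp hp).1 (mem_product.mp hp).2

lemma E3plus_eq_sum_of_subset {T : Finset ℝ} (hT : A - B ⊆ T) :
    E3plus A B = ∑ x ∈ T, rsub A B x ^ 3 :=
  sum_subset hT fun x _ hx => by rw [rsub_eq_zero_of_notMem A B hx, zero_pow three_ne_zero]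

lemma E3plus_le : E3plus A B ≤ #A ^ 2 * (#A * #B) := by
  calc E3plus A B ≤ ∑ x ∈ A - B, #A ^ 2 * rsub A B x :=
        sum_le_sum fun x _ => by
          rw [pow_succ]
          exact Nat.mul_le_mul_right _ (Nat.pow_le_pow_left (rsub_le_card_left A B x) 2)
    _ = #A ^ 2 * (#A * #B) := by rw [← mul_sum, sum_rsub]

lemma bddAbove_E3plus_div :
    BddAbove (Set.range fun B : {B : Finset ℝ // B.Nonempty} =>
      (E3plus A B.1 : ℝ) / (#A * (#B.1 : ℝ) ^ 2)) := by
  refine ⟨(#A : ℝ) ^ 2, ?_⟩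
  rintro _ ⟨⟨B, -⟩, rfl⟩
  refine div_le_of_le_mul₀ (by positivity) (by positivity) ?_
  have h : E3plus A B ≤ #A ^ 2 * (#A * #B ^ 2) :=
    (E3plus_le A B).trans (Nat.mul_le_mul_left _ (Nat.mul_le_mul_left _ (Nat.le_self_pow two_ne_zero _)))
  exact_mod_cast h

lemma dplus_nonneg : 0 ≤ dplus A :=
  Real.iSup_nonneg fun _ => by positivity

variable {A B}

lemma E3plus_le_dplus_mul (hB : B.Nonempty) :
    (E3plus A B : ℝ) ≤ dplus A * #A * (#B : ℝ) ^ 2 := by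
  rcases A.eq_empty_or_nonempty with rfl | hA
  · simp [E3plus]
  have hpos : (0 : ℝ) < #A * (#B : ℝ) ^ 2 := by
    have := hA.card_pos; have := hB.card_pos; positivity
  have h : (E3plus A B : ℝ) / (#A * (#B : ℝ) ^ 2) ≤ dplus A :=
    le_ciSup (bddAbove_E3plus_div A) (⟨B, hB⟩ : {B : Finset ℝ // B.Nonempty})
  rw [div_le_iff₀ hpos] at h
  linarith

lemma E3plus_rpow_le (hB : B.Nonempty) :
    (E3plus A B : ℝ) ^ ((1 : ℝ) / 3) ≤
      dplus A ^ ((1 : ℝ) / 3) * (#A : ℝ) ^ ((1 : ℝ) / 3) * ((#B : ℝ) ^ 2) ^ ((1 : ℝ) / 3) := by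
  have hd := dplus_nonneg A
  rw [← Real.mul_rpow hd (Nat.cast_nonneg _), ← Real.mul_rpow (by positivity) (by positivity)]
  exact Real.rpow_le_rpow (Nat.cast_nonneg _) (E3plus_le_dplus_mul hB) (by norm_num)

lemma dplus_le_of_E3plus_le {c : ℝ}
    (h : ∀ B : Finset ℝ, B.Nonempty → (E3plus A B : ℝ) ≤ c * (#B : ℝ) ^ 2) :
    dplus A ≤ (#A : ℝ)⁻¹ * c := by
  have : Nonempty {B : Finset ℝ // B.Nonempty} := ⟨⟨{0}, singleton_nonempty 0⟩⟩
  refine ciSup_le fun ⟨B, hB⟩ => ?_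
  have hB2 : (0 : ℝ) < (#B : ℝ) ^ 2 := by have := hB.card_pos; positivity
  calc (E3plus A B : ℝ) / (#A * (#B : ℝ) ^ 2) = (#A : ℝ)⁻¹ * ((E3plus A B : ℝ) / (#B : ℝ) ^ 2) := by
        ring
    _ ≤ (#A : ℝ)⁻¹ * c := by
        gcongr
        exact (div_le_iff₀ hB2).mpr (h B hB)

end Energy

lemma Lp_sum_le_sum_Lp {ι κ : Type*} [DecidableEq ι] (s : Finset ι) (t : Finset κ)
    (f : ι → κ → ℝ) (hf : ∀ i x, 0 ≤ f i x) {p : ℝ} (hp : 1 ≤ p) :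
    (∑ x ∈ t, (∑ i ∈ s, f i x) ^ p) ^ (1 / p) ≤ ∑ i ∈ s, (∑ x ∈ t, f i x ^ p) ^ (1 / p) := by
  induction s using Finset.induction with
  | empty =>
    simp [Real.zero_rpow (by positivity : p ≠ 0), Real.zero_rpow (by positivity : p⁻¹ ≠ 0)]
  | insert a s ha ih =>
    simp only [sum_insert ha]
    calc (∑ x ∈ t, (f a x + ∑ i ∈ s, f i x) ^ p) ^ (1 / p)
        ≤ (∑ x ∈ t, f a x ^ p) ^ (1 / p) + (∑ x ∈ t, (∑ i ∈ s, f i x) ^ p) ^ (1 / p) :=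
          Real.Lp_add_le_of_nonneg t hp (fun x _ => hf a x)
            fun x _ => sum_nonneg fun i _ => hf i x
      _ ≤ _ := by gcongr

lemma rsub_biUnion_le {ι : Type*} (s : Finset ι) (A : ι → Finset ℝ) (B : Finset ℝ) (x : ℝ) :
    rsub (s.biUnion A) B x ≤ ∑ j ∈ s, rsub (A j) B x := by
  refine (card_le_card fun p hp => ?_).trans card_biUnion_le
  simp only [mem_filter, mem_product, mem_biUnion] at hp ⊢
  obtain ⟨⟨⟨j, hj, hpj⟩, hpB⟩, hpx⟩ := hp
  exact ⟨j, hj, ⟨hpj, hpB⟩, hpx⟩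

lemma E3plus_biUnion_rpow_le {ι : Type*} [DecidableEq ι] (s : Finset ι) (A : ι → Finset ℝ)
    (B : Finset ℝ) :
    (E3plus (s.biUnion A) B : ℝ) ^ ((1 : ℝ) / 3) ≤
      ∑ j ∈ s, (E3plus (A j) B : ℝ) ^ ((1 : ℝ) / 3) := by
  set T := s.biUnion A - B
  have hcube : (E3plus (s.biUnion A) B : ℝ) ≤
      ∑ x ∈ T, (∑ j ∈ s, (rsub (A j) B x : ℝ)) ^ (3 : ℝ) := by
    simp only [E3plus, Real.rpow_ofNat]
    push_cast
    gcongr with x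
    exact_mod_cast rsub_biUnion_le s A B x
  calc (E3plus (s.biUnion A) B : ℝ) ^ ((1 : ℝ) / 3)
      ≤ (∑ x ∈ T, (∑ j ∈ s, (rsub (A j) B x : ℝ)) ^ (3 : ℝ)) ^ ((1 : ℝ) / 3) :=
        Real.rpow_le_rpow (Nat.cast_nonneg _) hcube (by norm_num)
    _ ≤ ∑ j ∈ s, (∑ x ∈ T, (rsub (A j) B x : ℝ) ^ (3 : ℝ)) ^ ((1 : ℝ) / 3) :=
        Lp_sum_le_sum_Lp s T _ (fun _ _ => Nat.cast_nonneg _) (by norm_num)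
    _ = ∑ j ∈ s, (E3plus (A j) B : ℝ) ^ ((1 : ℝ) / 3) := by
        refine sum_congr rfl fun j hj => ?_
        rw [E3plus_eq_sum_of_subset _ _ (sub_subset_sub (subset_biUnion_of_mem A hj) subset_rfl)]
        simp only [Real.rpow_ofNat]
        push_cast
        rfl

lemma rpow_one_div_three_pow_three {x : ℝ} (hx : 0 ≤ x) : (x ^ ((1 : ℝ) / 3)) ^ 3 = x := by
  rw [one_div]
  exact_mod_cast Real.rpow_inv_natCast_pow hx three_ne_zero

theorem stmt6_general (K : ℕ) (A : Fin K → Finset ℝ) :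
    dplus (Finset.univ.biUnion A) ≤
      ((Finset.univ.biUnion A).card : ℝ)⁻¹ *
        (∑ j : Fin K, dplus (A j) ^ ((1:ℝ)/3) * ((A j).card : ℝ) ^ ((1:ℝ)/3)) ^ 3 := by
  set S := ∑ j : Fin K, dplus (A j) ^ ((1:ℝ)/3) * ((A j).card : ℝ) ^ ((1:ℝ)/3)
  refine dplus_le_of_E3plus_le fun B hB => ?_
  have hS : 0 ≤ S := sum_nonneg fun j _ => by have := dplus_nonneg (A j); positivity
  have hroot : (E3plus (univ.biUnion A) B : ℝ) ^ ((1 : ℝ) / 3) ≤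
      S * ((#B : ℝ) ^ 2) ^ ((1 : ℝ) / 3) := by
    rw [sum_mul]
    exact (E3plus_biUnion_rpow_le univ A B).trans (sum_le_sum fun j _ => E3plus_rpow_le hB)
  calc (E3plus (univ.biUnion A) B : ℝ)
      = ((E3plus (univ.biUnion A) B : ℝ) ^ ((1 : ℝ) / 3)) ^ 3 :=
        (rpow_one_div_three_pow_three (Nat.cast_nonneg _)).symm
    _ ≤ (S * ((#B : ℝ) ^ 2) ^ ((1 : ℝ) / 3)) ^ 3 := by gcongr
    _ = S ^ 3 * (#B : ℝ) ^ 2 := by rw [mul_pow, rpow_one_div_three_pow_three (by positivity)]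

theorem stmt6 (K : ℕ) (A : Fin K → Finset ℝ)
    (hne : ∀ j, (A j).Nonempty)
    (hdisj : ∀ i j, i ≠ j → Disjoint (A i) (A j)) :
    dplus (Finset.univ.biUnion A) ≤
      ((Finset.univ.biUnion A).card : ℝ)⁻¹ *
        (∑ j : Fin K, dplus (A j) ^ ((1:ℝ)/3) * ((A j).card : ℝ) ^ ((1:ℝ)/3)) ^ 3 :=
  stmt6_general K A
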